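/- arXiv:2303.14296 — 3 statements merged into one kernel-verified Lean document; each statement's English description precedes it below -/
import Mathlib

section
/- For every natural number m, there exists an SP number a with a > m such that none of the m numbers a−1, a−2, …, a−m is an SP number. -/
/-- A natural number is an SP number if it is a prime times a square `k^2` with `k ≥ 2`. -/
def IsSP (n : ℕ) : Prop := ∃ p k : ℕ, p.Prime ∧ 2 ≤ k ∧ n = p * k ^ 2

/-- `Qset` consists of `1` together with all SP numbers. -/
def Qset : Set ℕ := {n | n = 1 ∨ IsSP n}

/-- `N x` is the smallest element of `Qset` strictly greater than `x`. -/
noncomputable def N (x : ℕ) : ℕ := sInf {y : ℕ | y ∈ Qset ∧ x < y}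

/-- The loop operation: `dot a b = N (|a - b|)`. -/
noncomputable def dot (a b : ℕ) : ℕ := N ((a : ℤ) - (b : ℤ)).natAbs

/-!
Take `2m` distinct primes `q` larger than `m`, two of them, `q` and `q'`, for each `1 ≤ i ≤ m`.
By the Chinese remainder theorem and Dirichlet's theorem there is a prime `p` with
`p ≡ i + q [MOD q ^ 2]` for every such pair `(i, q)`. With `k ≡ 1` modulo all the `q ^ 2`,
the SP number `a = p * k ^ 2` has `a - i ≡ q [MOD q ^ 2]` and `a - i ≡ q' [MOD q' ^ 2]`, so
`a - i` is divisible exactly once by two distinct primes, whereas a prime divides `p' * k' ^ 2`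
exactly once only if it is `p'`.
-/

open Nat Finset

lemma Nat.Prime.eq_of_dvd_mul_sq_of_not_sq_dvd {p q k : ℕ} (hp : p.Prime) (hq : q.Prime)
    (hdvd : q ∣ p * k ^ 2) (hsq : ¬ q ^ 2 ∣ p * k ^ 2) : q = p := by
  by_contra hne
  have hqk : q ∣ k := by
    rcases hq.dvd_mul.mp hdvd with h | h
    · exact absurd ((prime_dvd_prime_iff_eq hq hp).mp h) hne
    · exact hq.dvd_of_dvd_pow h
  exact hsq (Dvd.dvd.mul_left (pow_dvd_pow_of_dvd hqk 2) p)

lemma not_isSP_of_exactly_dvd {n q q' : ℕ} (hq : q.Prime) (hq' : q'.Prime) (hne : q ≠ q')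
    (hdvd : q ∣ n) (hsq : ¬ q ^ 2 ∣ n) (hdvd' : q' ∣ n) (hsq' : ¬ q' ^ 2 ∣ n) : ¬ IsSP n := by
  rintro ⟨p, k, hp, -, rfl⟩
  exact hne ((hp.eq_of_dvd_mul_sq_of_not_sq_dvd hq hdvd hsq).trans
    (hp.eq_of_dvd_mul_sq_of_not_sq_dvd hq' hdvd' hsq').symm)

lemma Nat.dvd_and_not_sq_dvd_of_modEq {n q : ℕ} (hq : 1 < q) (h : n ≡ q [MOD q ^ 2]) :
    q ∣ n ∧ ¬ q ^ 2 ∣ n := by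
  refine ⟨(h.dvd_iff (dvd_pow_self q two_ne_zero)).mpr dvd_rfl, fun hsq => ?_⟩
  have := le_of_dvd (by omega) ((h.dvd_iff dvd_rfl).mp hsq)
  nlinarith

theorem Nat.exists_prime_gt_modEq_of_coprime {ι : Type*} (t : Finset ι) (s r : ι → ℕ)
    (hs : ∀ j ∈ t, s j ≠ 0) (hst : Set.Pairwise t (Function.onFun Coprime s))
    (hrs : ∀ j ∈ t, Coprime (r j) (s j)) (n : ℕ) :
    ∃ p > n, p.Prime ∧ ∀ j ∈ t, p ≡ r j [MOD s j] := by
  obtain ⟨a, ha⟩ := chineseRemainderOfFinset r s t hs hst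
  have hcop : Coprime a (∏ j ∈ t, s j) := Coprime.prod_right fun j hj =>
    (ha j hj).gcd_eq.trans (hrs j hj)
  obtain ⟨p, hpn, hp, hpa⟩ :=
    forall_exists_prime_gt_and_modEq n (prod_ne_zero_iff.mpr hs) hcop
  exact ⟨p, hpn, hp, fun j hj => (hpa.of_dvd (dvd_prod_of_mem s hj)).trans (ha j hj)⟩

theorem exists_isSP_gt_modEq_of_coprime {ι : Type*} (t : Finset ι) (s r : ι → ℕ)
    (hs : ∀ j ∈ t, s j ≠ 0) (hst : Set.Pairwise t (Function.onFun Coprime s))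
    (hrs : ∀ j ∈ t, Coprime (r j) (s j)) (n : ℕ) :
    ∃ a, IsSP a ∧ n < a ∧ ∀ j ∈ t, a ≡ r j [MOD s j] := by
  obtain ⟨p, hpn, hp, hpr⟩ := exists_prime_gt_modEq_of_coprime t s r hs hst hrs n
  set M := ∏ j ∈ t, s j
  have hM : 0 < M := pos_of_ne_zero (prod_ne_zero_iff.mpr hs)
  refine ⟨p * (M + 1) ^ 2, ⟨p, M + 1, hp, by omega, rfl⟩,
    hpn.trans_le (Nat.le_mul_of_pos_right p (by positivity)), fun j hj => ?_⟩
  have hM1 : M + 1 ≡ 0 + 1 [MOD s j] :=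
    (modEq_zero_iff_dvd.mpr (dvd_prod_of_mem s hj)).add_right 1
  simpa using (hpr j hj).mul (hM1.pow 2)

lemma Nat.exists_injective_primes_gt (n : ℕ) :
    ∃ q : ℕ → ℕ, Function.Injective q ∧ ∀ j, (q j).Prime ∧ n < q j :=
  ⟨fun j => nth Nat.Prime (n + j), fun j j' h => by
    simpa using nth_injective infinite_setOfPred_prime h, fun j =>
    ⟨prime_nth_prime (n + j), lt_of_lt_of_le (by omega) (add_two_le_nth_prime (n + j))⟩⟩

theorem sp_preceded_by_gap (m : ℕ) :
    ∃ a : ℕ, IsSP a ∧ m < a ∧ ∀ i : ℕ, 1 ≤ i → i ≤ m → ¬ IsSP (a - i) := by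
  obtain ⟨q, hq_inj, hq⟩ := exists_injective_primes_gt m
  -- `a - i` is attached to the primes `q (2 * i)` and `q (2 * i + 1)`
  set t := Ico 2 (2 * m + 2)
  have hresidue (j : ℕ) (hj : j ∈ t) : Coprime (j / 2 + q j) (q j ^ 2) := by
    have hqm := (hq j).2
    have hndvd : ¬ q j ∣ j / 2 := by
      rw [mem_Ico] at hj
      exact not_dvd_of_pos_of_lt (by omega) (by omega)
    exact (coprime_add_self_left.mpr ((hq j).1.coprime_iff_not_dvd.mpr hndvd).symm).pow_right 2
  obtain ⟨a, ha, hma, haq⟩ := exists_isSP_gt_modEq_of_coprime t (fun j => q j ^ 2)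
    (fun j => j / 2 + q j) (fun j _ => pow_ne_zero 2 (hq j).1.ne_zero)
    (fun j _ j' _ hne => Coprime.pow 2 2
      ((coprime_primes (hq j).1 (hq j').1).mpr (hq_inj.ne hne))) hresidue m
  refine ⟨a, ha, hma, fun i hi him => ?_⟩
  have hexact (j : ℕ) (hj : j ∈ t) (hji : j / 2 = i) : q j ∣ a - i ∧ ¬ q j ^ 2 ∣ a - i := by
    refine dvd_and_not_sq_dvd_of_modEq (hq j).1.one_lt (ModEq.add_left_cancel' i ?_)
    rw [Nat.add_sub_cancel' (by omega), ← hji]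
    exact haq j hj
  obtain ⟨hdvd, hsq⟩ := hexact (2 * i) (mem_Ico.mpr (by omega)) (by omega)
  obtain ⟨hdvd', hsq'⟩ := hexact (2 * i + 1) (mem_Ico.mpr (by omega)) (by omega)
  exact not_isSP_of_exactly_dvd (hq _).1 (hq _).1 (hq_inj.ne (by omega))
    hdvd hsq hdvd' hsq'
end

section
/- For every natural number n ≥ 2, there exist pairwise distinct elements a₁, a₂, …, aₙ of Q such that a₁ • a₂ = a₂ • a₃ = ⋯ = a_{n−1} • aₙ; that is, there exist an injective function f from {1,…,n} to Q and an element l ∈ Q with f(j) • f(j+1) = l for every j with 1 ≤ j ≤ n−1. -/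
/-! The elements `2 a²` (`a ≥ 2`) of `Q` have consecutive differences `2 (a + 1)² - 2 a² = 4 a + 2`,
so along the chain `2 (K + 1)², …, 2 (K + n)²` all dots agree as soon as the differences
`4 (K + j) + 2` lie in one gap of `Q`, where `N` is constant. Arbitrarily long gaps exist: by the
Chinese remainder theorem choose `Y` such that each of `Y + 1, …, Y + L` is exactly divisible by two
distinct primes, which rules out the shape `p k²`. -/

lemma two_mul_sq_mem_Qset {a : ℕ} (ha : 2 ≤ a) : 2 * a ^ 2 ∈ Qset :=
  Or.inr ⟨2, a, Nat.prime_two, ha, rfl⟩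

lemma N_mem_Qset_and_lt (x : ℕ) : N x ∈ Qset ∧ x < N x :=
  Nat.sInf_mem (s := {y | y ∈ Qset ∧ x < y})
    ⟨2 * (x + 2) ^ 2, two_mul_sq_mem_Qset (by omega), by nlinarith⟩

lemma N_le_of_mem_Qset {x y : ℕ} (hy : y ∈ Qset) (hxy : x < y) : N x ≤ y :=
  Nat.sInf_le ⟨hy, hxy⟩

lemma N_eq_of_forall_notMem_Qset {x y : ℕ} (hxy : x ≤ y)
    (hgap : ∀ z, x < z → z ≤ y → z ∉ Qset) : N y = N x := by
  obtain ⟨hNx, hxNx⟩ := N_mem_Qset_and_lt x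
  obtain ⟨hNy, hyNy⟩ := N_mem_Qset_and_lt y
  have hyNx : y < N x := by
    by_contra! h
    exact hgap _ hxNx h hNx
  exact le_antisymm (N_le_of_mem_Qset hNx hyNx) (N_le_of_mem_Qset hNy (hxy.trans_lt hyNy))

lemma dvd_and_not_sq_dvd_of_modEq {X r : ℕ} (hr : 2 ≤ r) (h : X ≡ r [MOD r ^ 2]) :
    r ∣ X ∧ ¬ r ^ 2 ∣ X := by
  refine ⟨(h.dvd_iff (dvd_pow_self r two_ne_zero)).2 dvd_rfl, fun hdvd => ?_⟩
  have := Nat.le_of_dvd (by omega) ((h.dvd_iff dvd_rfl).1 hdvd)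
  nlinarith

lemma not_isSP_of_exact_dvd {X r s : ℕ} (hr : r.Prime) (hs : s.Prime) (hrs : r ≠ s)
    (hrX : r ∣ X) (hr2 : ¬ r ^ 2 ∣ X) (hsX : s ∣ X) (hs2 : ¬ s ^ 2 ∣ X) : ¬ IsSP X := by
  rintro ⟨p, k, hp, -, rfl⟩
  have sq_dvd : ∀ q : ℕ, q.Prime → q ≠ p → q ∣ p * k ^ 2 → q ^ 2 ∣ p * k ^ 2 := by
    intro q hq hqp hdvd
    rcases hq.dvd_mul.mp hdvd with h | h
    · exact absurd ((Nat.prime_dvd_prime_iff_eq hq hp).mp h) hqp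
    · exact Dvd.dvd.mul_left (pow_dvd_pow_of_dvd (hq.dvd_of_dvd_pow h) 2) p
  by_cases hrp : r = p
  · exact hs2 (sq_dvd s hs (fun h => hrs (hrp.trans h.symm)) hsX)
  · exact hr2 (sq_dvd r hr hrp hrX)

lemma notMem_Qset_of_modEq_sq {X r s : ℕ} (hr : r.Prime) (hs : s.Prime) (hrs : r ≠ s)
    (hXr : X ≡ r [MOD r ^ 2]) (hXs : X ≡ s [MOD s ^ 2]) : X ∉ Qset := by
  obtain ⟨hrX, hr2X⟩ := dvd_and_not_sq_dvd_of_modEq hr.two_le hXr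
  obtain ⟨hsX, hs2X⟩ := dvd_and_not_sq_dvd_of_modEq hs.two_le hXs
  rintro (rfl | hSP)
  · exact hr.ne_one (Nat.dvd_one.1 hrX)
  · exact not_isSP_of_exact_dvd hr hs hrs hrX hr2X hsX hs2X hSP

lemma exists_forall_add_notMem_Qset (L : ℕ) : ∃ Y, ∀ t, 1 ≤ t → t ≤ L → Y + t ∉ Qset := by
  set p : ℕ → ℕ := Nat.nth Nat.Prime
  have hp : ∀ i, (p i).Prime := Nat.prime_nth_prime
  have hp_inj : Function.Injective p := Nat.nth_injective Nat.infinite_setOfPred_prime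
  -- `Y + t` is made exactly divisible by the primes `p (2 * t - 2)` and `p (2 * t - 1)`
  obtain ⟨Y, hY⟩ := Nat.chineseRemainderOfFinset
    (fun i => p i ^ 2 * (i / 2 + 1) + p i - (i / 2 + 1)) (fun i => p i ^ 2) (Finset.range (2 * L))
    (fun i _ => pow_ne_zero 2 (hp i).ne_zero)
    (fun i _ j _ hij => Nat.Coprime.pow 2 2 ((Nat.coprime_primes (hp i) (hp j)).2 (hp_inj.ne hij)))
  have hYp : ∀ i < 2 * L, Y + (i / 2 + 1) ≡ p i [MOD p i ^ 2] := by
    intro i hi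
    have hle : i / 2 + 1 ≤ p i ^ 2 * (i / 2 + 1) :=
      Nat.le_mul_of_pos_left _ (pow_pos (hp i).pos 2)
    calc Y + (i / 2 + 1)
        ≡ p i ^ 2 * (i / 2 + 1) + p i - (i / 2 + 1) + (i / 2 + 1) [MOD p i ^ 2] :=
          (hY i (Finset.mem_range.2 hi)).add_right _
      _ = p i + p i ^ 2 * (i / 2 + 1) := by omega
      _ ≡ p i [MOD p i ^ 2] := Nat.add_mul_mod_self_left _ _ _
  refine ⟨Y, fun t ht1 htL => ?_⟩
  have h₁ := hYp (2 * t - 2) (by omega)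
  have h₂ := hYp (2 * t - 1) (by omega)
  rw [show (2 * t - 2) / 2 + 1 = t by omega] at h₁
  rw [show (2 * t - 1) / 2 + 1 = t by omega] at h₂
  exact notMem_Qset_of_modEq_sq (hp _) (hp _) (hp_inj.ne (by omega)) h₁ h₂

lemma dot_two_mul_sq_succ (a : ℕ) : dot (2 * a ^ 2) (2 * (a + 1) ^ 2) = N (4 * a + 2) := by
  have h : ((2 * a ^ 2 : ℕ) : ℤ) - ((2 * (a + 1) ^ 2 : ℕ) : ℤ) = -((4 * a + 2 : ℕ) : ℤ) := by
    push_cast; ring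
  rw [dot, h, Int.natAbs_neg, Int.natAbs_natCast]

theorem equal_dot_chain_general (n : ℕ) :
    ∃ f : ℕ → ℕ,
      (∀ j, 1 ≤ j → j ≤ n → f j ∈ Qset) ∧
      (∀ j j', 1 ≤ j → j ≤ n → 1 ≤ j' → j' ≤ n → f j = f j' → j = j') ∧
      ∃ l ∈ Qset, ∀ j, 1 ≤ j → j ≤ n - 1 → dot (f j) (f (j + 1)) = l := by
  obtain ⟨Y, hgap⟩ := exists_forall_add_notMem_Qset (4 * n + 6)
  set K := Y / 4 + 2 with hK
  refine ⟨fun j => 2 * (K + j) ^ 2, fun j _ _ => two_mul_sq_mem_Qset (by omega), ?_,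
    N Y, (N_mem_Qset_and_lt Y).1, fun j hj1 hjn => ?_⟩
  · intro j j' _ _ _ _ h
    have := Nat.pow_left_injective two_ne_zero (Nat.eq_of_mul_eq_mul_left two_pos h)
    omega
  · change dot (2 * (K + j) ^ 2) (2 * (K + j + 1) ^ 2) = N Y
    rw [dot_two_mul_sq_succ]
    refine N_eq_of_forall_notMem_Qset (by omega) fun z hYz hz => ?_
    simpa [show Y + (z - Y) = z by omega] using hgap (z - Y) (by omega) (by omega)

theorem equal_dot_chain (n : ℕ) (hn : 2 ≤ n) :
    ∃ f : ℕ → ℕ,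
      (∀ j, 1 ≤ j → j ≤ n → f j ∈ Qset) ∧
      (∀ j j', 1 ≤ j → j ≤ n → 1 ≤ j' → j' ≤ n → f j = f j' → j = j') ∧
      ∃ l ∈ Qset, ∀ j, 1 ≤ j → j ≤ n - 1 → dot (f j) (f (j + 1)) = l :=
  equal_dot_chain_general n
end

section
/- There do not exist elements a, b, c ∈ Q with a < b < c, b − a ≥ 4 and c − b ≥ 4, such that a • b = b • c = a • c. -/
/-!
Let `d ≤ e` be the two gaps. The three products are `N d`, `N e` and `N (d + e)`, and
`N (d + e) > d + e ≥ 2 d`. But by Bertrand's postulate `Q` meets every interval `(x, 2x]` with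
`x ≥ 4` (at some `4q` with `q` prime), so `N d ≤ 2 d` and the products cannot all agree.
-/

lemma prime_mul_sq_mem_Qset {p k : ℕ} (hp : p.Prime) (hk : 2 ≤ k) : p * k ^ 2 ∈ Qset :=
  Or.inr ⟨p, k, hp, hk, rfl⟩

lemma exists_mem_Qset_gt_le_two_mul {x : ℕ} (hx : 4 ≤ x) : ∃ y ∈ Qset, x < y ∧ y ≤ 2 * x := by
  obtain ⟨q, hq, hxq, hq2⟩ := Nat.exists_prime_lt_and_le_two_mul (x / 4) (by omega)
  exact ⟨q * 2 ^ 2, prime_mul_sq_mem_Qset hq le_rfl, by omega, by omega⟩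

lemma exists_mem_Qset_gt (x : ℕ) : ∃ y ∈ Qset, x < y := by
  obtain ⟨y, hy, hxy, -⟩ := exists_mem_Qset_gt_le_two_mul (Nat.le_add_left 4 x)
  exact ⟨y, hy, by omega⟩

lemma lt_N (x : ℕ) : x < N x :=
  (Nat.sInf_mem (exists_mem_Qset_gt x)).2

lemma N_le {x y : ℕ} (hy : y ∈ Qset) (h : x < y) : N x ≤ y :=
  Nat.sInf_le ⟨hy, h⟩

lemma N_le_two_mul {x : ℕ} (hx : 4 ≤ x) : N x ≤ 2 * x := by
  obtain ⟨y, hy, hxy, hy2⟩ := exists_mem_Qset_gt_le_two_mul hx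
  exact (N_le hy hxy).trans hy2

lemma dot_of_le {a b : ℕ} (h : a ≤ b) : dot a b = N (b - a) := by
  rw [dot, show ((a : ℤ) - b).natAbs = b - a by omega]

theorem no_equal_triple :
    ¬ ∃ a b c : ℕ, a ∈ Qset ∧ b ∈ Qset ∧ c ∈ Qset ∧
      a < b ∧ b < c ∧ 4 ≤ b - a ∧ 4 ≤ c - b ∧
      dot a b = dot b c ∧ dot b c = dot a c := by
  rintro ⟨a, b, c, -, -, -, hab, hbc, hba, hcb, hdot₁, hdot₂⟩
  rw [dot_of_le hab.le, dot_of_le hbc.le] at hdot₁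
  rw [dot_of_le hbc.le, dot_of_le (hab.trans hbc).le] at hdot₂
  have := N_le_two_mul hba
  have := N_le_two_mul hcb
  have := lt_N (c - a)
  omega
end
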